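/- arXiv:1809.06829 — 2 statements merged into one kernel-verified Lean document; each statement's English description precedes it below -/
import Mathlib

section
/- Let Q ⊂ ℝ^{n+m} be a cube, X a metric space, and f : Q → X a Lipschitz map. Then ℋ^{n,m}_∞(f,Q) ≤ (ω_n/2^n)(n+m)^{n/2} ∫_Q Θ_*^n(f,x) dx ≤ (ω_n/2^n)(n+m)^{n/2} ∫_Q Θ^{*n}(f,x) dx. -/
open MeasureTheory Metric Set Filter
open scoped ENNReal NNReal Topology

noncomputable section

abbrev EucSp (k : ℕ) := EuclideanSpace ℝ (Fin k)

/-- The volume of the unit ball in `ℝ^n`. -/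
def unitBallVol (n : ℕ) : ℝ≥0∞ := volume (Metric.ball (0 : EucSp n) 1)

/-- The `n`-dimensional Hausdorff content. -/
def hContent {X : Type*} [PseudoEMetricSpace X] (n : ℕ) (E : Set X) : ℝ≥0∞ :=
  ⨅ (A : ℕ → Set X) (_ : E ⊆ ⋃ i, A i),
    unitBallVol n / 2 ^ n * ∑' i, EMetric.diam (A i) ^ n

/-- Upper n-density. -/
def upperDensity {k : ℕ} {X : Type*} [PseudoEMetricSpace X] (n : ℕ)
    (f : EucSp k → X) (A : Set (EucSp k)) (x : EucSp k) : ℝ≥0∞ :=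
  Filter.limsup
    (fun r : ℝ => hContent n (f '' (Metric.ball x r ∩ A)) /
      (unitBallVol n * ENNReal.ofReal r ^ n)) (𝓝[>] (0:ℝ))

def lowerDensity {k : ℕ} {X : Type*} [PseudoEMetricSpace X] (n : ℕ)
    (f : EucSp k → X) (A : Set (EucSp k)) (x : EucSp k) : ℝ≥0∞ :=
  Filter.liminf
    (fun r : ℝ => hContent n (f '' (Metric.ball x r ∩ A)) /
      (unitBallVol n * ENNReal.ofReal r ^ n)) (𝓝[>] (0:ℝ))

def IsDensityPoint {k : ℕ} (E : Set (EucSp k)) (x : EucSp k) : Prop :=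
  Filter.Tendsto (fun r : ℝ => volume (E ∩ Metric.ball x r) / volume (Metric.ball x r))
    (𝓝[>] (0:ℝ)) (𝓝 1)

def HasApproxDerivWithinAt {k : ℕ} (A : Set (EucSp k)) (f : EucSp k → ℝ)
    (L : EucSp k →ₗ[ℝ] ℝ) (x : EucSp k) : Prop :=
  ∃ Ax : Set (EucSp k), Ax ⊆ A ∧ MeasurableSet Ax ∧ IsDensityPoint Ax x ∧
    Filter.Tendsto (fun y => |f y - f x - L (y - x)| / ‖y - x‖) (𝓝[Ax] x) (𝓝 0)

abbrev LpInfty := lp (fun _ : ℕ => ℝ) ∞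

def HasCompApproxDerivWithinAt {k : ℕ} (A : Set (EucSp k)) (f : EucSp k → LpInfty)
    (D : EucSp k →ₗ[ℝ] (ℕ → ℝ)) (x : EucSp k) : Prop :=
  ∀ i : ℕ, HasApproxDerivWithinAt A (fun y => f y i) ((LinearMap.proj i).comp D) x

def IsBiLipC1DiffeoOn {k : ℕ} (G Ginv : EucSp k → EucSp k) (U : Set (EucSp k)) : Prop :=
  IsOpen U ∧ IsOpen (G '' U) ∧ (∀ x ∈ U, Ginv (G x) = x) ∧ (∀ y ∈ G '' U, G (Ginv y) = y) ∧
    ContDiffOn ℝ 1 G U ∧ ContDiffOn ℝ 1 Ginv (G '' U) ∧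
    ∃ Λ : ℝ≥0, LipschitzOnWith Λ G U ∧ LipschitzOnWith Λ Ginv (G '' U)

def IsFinCoordPerm (Ψ : LpInfty → LpInfty) : Prop :=
  ∃ σ : Equiv.Perm ℕ, {i | σ i ≠ i}.Finite ∧ ∀ (x : LpInfty) (i : ℕ), Ψ x i = x (σ i)

def openCube {k : ℕ} (c : EucSp k) (d : ℝ) : Set (EucSp k) := {x | ∀ i, |x i - c i| < d / 2}

def closedCube {k : ℕ} (c : EucSp k) (d : ℝ) : Set (EucSp k) := {x | ∀ i, |x i - c i| ≤ d / 2}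

def hnmContent {N : ℕ} {X : Type*} [PseudoEMetricSpace X] (n m : ℕ)
    (f : EucSp N → X) (Q : Set (EucSp N)) : ℝ≥0∞ :=
  ⨅ (c : ℕ → EucSp N) (d : ℕ → ℝ) (_ : ∀ j, 0 ≤ d j) (_ : ∀ j, openCube (c j) (d j) ⊆ Q)
    (_ : Pairwise (Function.onFun Disjoint fun j => openCube (c j) (d j)))
    (_ : volume (Q \ ⋃ j, openCube (c j) (d j)) = 0),
    ∑' j, hContent n (f '' openCube (c j) (d j)) * ENNReal.ofReal (d j) ^ m

def matrixRow {n k : ℕ} (D : Matrix (Fin n) (Fin k) ℝ) (i : Fin n) : EucSp k →ₗ[ℝ] ℝ :=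
  (EuclideanSpace.proj i).toLinearMap.comp (Matrix.toEuclideanLin D)

def jacDet {n k : ℕ} (D : Matrix (Fin n) (Fin k) ℝ) : ℝ := Real.sqrt ((D * D.transpose).det)

def upperLintegral {Y : Type*} [MeasurableSpace Y] (μ : Measure Y) (g : Y → ℝ≥0∞) : ℝ≥0∞ :=
  ⨅ (h : Y → ℝ≥0∞) (_ : Measurable h) (_ : ∀ y, g y ≤ h y), ∫⁻ y, h y ∂μ


/-!
Around almost every `x ∈ Q` pick `k` with `kδ ≤ Θ_*^n(f,x) < (k+1)δ`. There are arbitrarily small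
`r` with `ℋ^n_∞(f(B(x,r) ∩ Q)) ≤ (k+1)δ ω_n r^n`, and the cube of side `d = 2r/√(n+m)` inscribed
in `B(x,r)` then has `ℋ^n_∞(f(cube)) d^m ≤ (k+1)δ (ω_n/2^n)(n+m)^{n/2} d^{n+m}`. Taking `x` to be
a density point of `{Θ_*^n(f,·) ≥ kδ}` gives `kδ d^{n+m} ≤ ∫_cube Θ_*^n(f,·) + δ d^{n+m}` for small
cubes. Vitali's covering theorem selects disjoint such cubes covering `Q` up to a null set; summing
and letting `δ → 0` gives the first inequality. The lower density is measurable because the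
infimum of the density ratios over radii in `(0, ε)` is upper semicontinuous in `x`.
-/

lemma unitBallVol_pos (k : ℕ) : 0 < unitBallVol k :=
  measure_ball_pos volume 0 one_pos

lemma unitBallVol_ne_top (k : ℕ) : unitBallVol k ≠ ∞ := measure_ball_lt_top.ne

lemma half_sqrt_natCast_pos {N : ℕ} (hN : N ≠ 0) : 0 < √(N : ℝ) / 2 :=
  half_pos (Real.sqrt_pos.2 (by exact_mod_cast Nat.pos_of_ne_zero hN))

lemma frequently_nhdsGT_zero_mul_left {c : ℝ} (hc : 0 < c) {p : ℝ → Prop}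
    (h : ∃ᶠ r in 𝓝[>] 0, p r) : ∃ᶠ d in 𝓝[>] 0, p (c * d) := fun h' =>
  h (by simpa [mul_inv_cancel_left₀ hc.ne'] using eventually_nhdsGT_zero_mul_left (inv_pos.2 hc) h')

lemma tendsto_mul_left_nhdsGT_zero {c : ℝ} (hc : 0 < c) :
    Tendsto (c * ·) (𝓝[>] 0) (𝓝[>] 0) :=
  tendsto_iff_comap.2 (comap_mulLeft_nhdsGT_zero hc).ge

lemma ENNReal.eventually_mul_le_of_tendsto_div_zero {ι : Type*} {l : Filter ι} {u v : ι → ℝ≥0∞}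
    (h : Tendsto (fun i => u i / v i) l (𝓝 0)) {c : ℝ≥0∞} (hc : c ≠ ∞) :
    ∀ᶠ i in l, c * u i ≤ v i := by
  rcases eq_or_ne c 0 with rfl | hc₀
  · simp
  filter_upwards [h.eventually (gt_mem_nhds (ENNReal.inv_pos.2 hc))] with i hi
  have hi' : u i ≤ c⁻¹ * v i := (ENNReal.div_le_iff_le_mul (Or.inr (ENNReal.inv_ne_top.2 hc₀))
    (Or.inr (ENNReal.inv_ne_zero.2 hc))).1 hi.le
  calc c * u i ≤ c * (c⁻¹ * v i) := mul_le_mul_right hi' c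
    _ = v i := by rw [← mul_assoc, ENNReal.mul_inv_cancel hc₀ hc, one_mul]

lemma ENNReal.exists_nat_mul_le_lt_add {a δ : ℝ≥0∞} (ha : a ≠ ∞) (hδ : δ ≠ 0) :
    ∃ k : ℕ, k * δ ≤ a ∧ a < k * δ + δ := by
  classical
  have hex : ∃ j : ℕ, a < j * δ := ENNReal.exists_nat_mul_gt hδ ha
  have hspec := Nat.find_spec hex
  have hne : Nat.find hex ≠ 0 := fun h => by rw [h] at hspec; simp at hspec
  obtain ⟨k, hk⟩ := Nat.exists_eq_succ_of_ne_zero hne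
  refine ⟨k, not_lt.1 (Nat.find_min hex (by omega)), ?_⟩
  rw [hk] at hspec
  simpa [add_mul] using hspec

section HausdorffContent

variable {X : Type*} [PseudoEMetricSpace X] {n : ℕ}

lemma hContent_mono {E F : Set X} (h : E ⊆ F) : hContent n E ≤ hContent n F :=
  le_iInf₂ fun A hF => iInf₂_le A (h.trans hF)

lemma hContent_empty (hn : n ≠ 0) : hContent n (∅ : Set X) = 0 := by
  refine le_antisymm ((iInf₂_le (fun _ => (∅ : Set X)) (empty_subset _)).trans_eq ?_) zero_le
  change unitBallVol n / 2 ^ n * ∑' _ : ℕ, Metric.ediam (∅ : Set X) ^ n = 0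
  simp [hn]

lemma hContent_zero (E : Set X) : hContent 0 E = ∞ := by
  refine eq_top_iff.2 (le_iInf₂ fun A _ => ?_)
  simp [(unitBallVol_pos 0).ne']

end HausdorffContent

section Cubes

variable {N : ℕ}

lemma openCube_eq_setOf_mem_Ioo (c : EucSp N) (d : ℝ) :
    openCube c d = {x | ∀ i, x i ∈ Ioo (c i - d / 2) (c i + d / 2)} := by
  ext x
  simp only [openCube, mem_ofPred_eq, mem_Ioo, abs_sub_lt_iff]
  exact forall_congr' fun i => by constructor <;> rintro ⟨h₁, h₂⟩ <;> constructor <;> linarith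

lemma closedCube_eq_setOf_mem_Icc (c : EucSp N) (d : ℝ) :
    closedCube c d = {x | ∀ i, x i ∈ Icc (c i - d / 2) (c i + d / 2)} := by
  ext x
  simp only [closedCube, mem_ofPred_eq, mem_Icc, abs_sub_le_iff]
  exact forall_congr' fun i => by constructor <;> rintro ⟨h₁, h₂⟩ <;> constructor <;> linarith

lemma volume_setOf_forall_mem (s : Fin N → Set ℝ) :
    volume {x : EucSp N | ∀ i, x i ∈ s i} = ∏ i, volume (s i) := by
  have : {x : EucSp N | ∀ i, x i ∈ s i} =
      (MeasurableEquiv.toLp 2 (Fin N → ℝ)).symm ⁻¹' Set.pi univ s := by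
    ext x; simp
  rw [this, (EuclideanSpace.volume_preserving_symm_measurableEquiv_toLp
    (Fin N)).measure_preimage_equiv, volume_pi_pi]

lemma volume_openCube (c : EucSp N) (d : ℝ) : volume (openCube c d) = ENNReal.ofReal d ^ N := by
  rw [openCube_eq_setOf_mem_Ioo, volume_setOf_forall_mem]
  simp

lemma volume_closedCube (c : EucSp N) (d : ℝ) :
    volume (closedCube c d) = ENNReal.ofReal d ^ N := by
  rw [closedCube_eq_setOf_mem_Icc, volume_setOf_forall_mem]
  simp

lemma isOpen_openCube (c : EucSp N) (d : ℝ) : IsOpen (openCube c d) := by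
  simp only [openCube, ofPred_forall]
  exact isOpen_iInter_of_finite fun i => isOpen_lt (by fun_prop) continuous_const

lemma isClosed_closedCube (c : EucSp N) (d : ℝ) : IsClosed (closedCube c d) := by
  simp only [closedCube, ofPred_forall]
  exact isClosed_iInter fun i => isClosed_le (by fun_prop) continuous_const

lemma openCube_subset_closedCube (c : EucSp N) (d : ℝ) : openCube c d ⊆ closedCube c d :=
  fun _ hx i => (hx i).le

lemma mem_openCube_self (c : EucSp N) {d : ℝ} (hd : 0 < d) : c ∈ openCube c d :=
  fun i => by simpa using hd

lemma openCube_zero (hN : N ≠ 0) (c : EucSp N) : openCube c 0 = ∅ :=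
  eq_empty_of_forall_notMem fun x hx => (abs_nonneg _).not_gt (by simpa using hx ⟨0, by omega⟩)

lemma volume_closedCube_diff_openCube (c : EucSp N) (d : ℝ) :
    volume (closedCube c d \ openCube c d) = 0 := by
  rw [measure_sdiff (openCube_subset_closedCube c d) (isOpen_openCube c d).nullMeasurableSet
    (by simp [volume_openCube]), volume_closedCube, volume_openCube, tsub_self]

lemma dist_le_sqrt_mul_of_forall_abs_sub_le {x c : EucSp N} {t : ℝ} (ht : 0 ≤ t)
    (h : ∀ i, |x i - c i| ≤ t) : dist x c ≤ √N * t := by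
  rw [EuclideanSpace.dist_eq, ← Real.sqrt_sq ht, ← Real.sqrt_mul (Nat.cast_nonneg N)]
  refine Real.sqrt_le_sqrt ?_
  calc ∑ i, dist (x i) (c i) ^ 2 ≤ ∑ _i : Fin N, t ^ 2 :=
        Finset.sum_le_sum fun i _ => by
          rw [Real.dist_eq]; exact pow_le_pow_left₀ (abs_nonneg _) (h i) 2
    _ = N * t ^ 2 := by simp

lemma closedCube_subset_closedBall (c : EucSp N) {d : ℝ} (hd : 0 ≤ d) :
    closedCube c d ⊆ closedBall c (√N / 2 * d) := fun x hx => by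
  simpa [div_mul_eq_mul_div, mul_div_assoc] using
    dist_le_sqrt_mul_of_forall_abs_sub_le (by positivity) hx

lemma openCube_subset_ball (hN : N ≠ 0) (c : EucSp N) (d : ℝ) :
    openCube c d ⊆ ball c (√N / 2 * d) := fun x hx => by
  have hne : (Finset.univ : Finset (Fin N)).Nonempty := ⟨⟨0, by omega⟩, Finset.mem_univ _⟩
  obtain ⟨i₀, -, hi₀⟩ := Finset.exists_max_image Finset.univ (fun i => |x i - c i|) hne
  have hdist := dist_le_sqrt_mul_of_forall_abs_sub_le (abs_nonneg _)
    fun i => hi₀ i (Finset.mem_univ _)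
  rw [mem_ball, div_mul_eq_mul_div, mul_div_assoc]
  exact hdist.trans_lt (mul_lt_mul_of_pos_left (hx i₀) (by positivity))

lemma volume_closedBall_mul_eq (x : EucSp N) {c d : ℝ} (hc : 0 ≤ c) (hd : 0 ≤ d) :
    volume (closedBall x (c * d)) =
      ENNReal.ofReal (c ^ N) * unitBallVol N * volume (openCube x d) := by
  rw [Measure.addHaar_closedBall volume x (by positivity), finrank_euclideanSpace_fin,
    volume_openCube, mul_pow, ENNReal.ofReal_mul (by positivity), ENNReal.ofReal_pow hd,
    unitBallVol]
  ring

lemma tendsto_volume_inter_openCube_div (hN : N ≠ 0) {E : Set (EucSp N)} {x : EucSp N}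
    (hx : Tendsto (fun r => volume (E ∩ closedBall x r) / volume (closedBall x r)) (𝓝[>] 0)
      (𝓝 0)) :
    Tendsto (fun d => volume (E ∩ openCube x d) / volume (openCube x d)) (𝓝[>] 0) (𝓝 0) := by
  set c := √N / 2
  have hc : 0 < c := half_sqrt_natCast_pos hN
  set β := ENNReal.ofReal (c ^ N) * unitBallVol N
  have hβ : β ≠ 0 := mul_ne_zero (by simp [hc]) (unitBallVol_pos N).ne'
  have hβ' : β ≠ ∞ := ENNReal.mul_ne_top ENNReal.ofReal_ne_top (unitBallVol_ne_top N)
  have hball := ENNReal.Tendsto.const_mul (hx.comp (tendsto_mul_left_nhdsGT_zero hc)) (Or.inr hβ')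
  rw [mul_zero] at hball
  refine tendsto_of_tendsto_of_tendsto_of_le_of_le' tendsto_const_nhds hball
    (Eventually.of_forall fun _ => zero_le) ?_
  filter_upwards [self_mem_nhdsWithin] with d (hd : 0 < d)
  have hsub : openCube x d ⊆ closedBall x (c * d) :=
    (openCube_subset_ball hN x d).trans ball_subset_closedBall
  calc volume (E ∩ openCube x d) / volume (openCube x d)
      ≤ volume (E ∩ closedBall x (c * d)) / volume (openCube x d) :=
        ENNReal.div_le_div_right (measure_mono (inter_subset_inter_right _ hsub)) _
    _ = β * (volume (E ∩ closedBall x (c * d)) / volume (closedBall x (c * d))) := by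
        rw [volume_closedBall_mul_eq x hc.le hd.le, ← ENNReal.mul_div_mul_left _ _ hβ hβ',
          mul_div_assoc]

end Cubes
section LowerDensity

variable {k n : ℕ} {X : Type*} [PseudoEMetricSpace X]

def densityRatio (n : ℕ) (f : EucSp k → X) (A : Set (EucSp k)) (x : EucSp k) (r : ℝ) : ℝ≥0∞ :=
  hContent n (f '' (ball x r ∩ A)) / (unitBallVol n * ENNReal.ofReal r ^ n)

lemma upperSemicontinuous_iInf_densityRatio (n : ℕ) (f : EucSp k → X) (A : Set (EucSp k))
    (ε : ℝ) : UpperSemicontinuous fun x => ⨅ r ∈ Ioo 0 ε, densityRatio n f A x r := by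
  intro x c hc
  obtain ⟨r, hr, hrc⟩ : ∃ r ∈ Ioo 0 ε, densityRatio n f A x r < c := by
    simpa only [iInf_lt_iff, exists_prop] using hc
  have hden : unitBallVol n * ENNReal.ofReal r ^ n ≠ ∞ :=
    ENNReal.mul_ne_top (unitBallVol_ne_top n) (by simp)
  rw [densityRatio] at hrc
  set a := hContent n (f '' (ball x r ∩ A))
  have ha : a ≠ ∞ := fun h => by
    rw [h, ENNReal.top_div_of_ne_top hden] at hrc
    exact not_top_lt hrc
  have hcont : Tendsto (fun s => a / (unitBallVol n * ENNReal.ofReal s ^ n)) (𝓝 r)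
      (𝓝 (densityRatio n f A x r)) :=
    ENNReal.Tendsto.const_div (ENNReal.Tendsto.const_mul
      (ENNReal.Tendsto.pow (ENNReal.continuous_ofReal.tendsto r)) (Or.inr (unitBallVol_ne_top n)))
      (Or.inr ha)
  -- shrinking `r` to a nearby `s < r` keeps the ratio below `c`, and `B(y,s) ⊆ B(x,r)` for `y`
  -- close to `x`
  obtain ⟨s, hsc, hs⟩ := ((hcont.eventually (gt_mem_nhds hrc)).filter_mono nhdsWithin_le_nhds
    |>.and (Ioo_mem_nhdsLT hr.1)).exists (f := 𝓝[<] r)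
  filter_upwards [ball_mem_nhds x (sub_pos.2 hs.2)] with y hy
  refine lt_of_le_of_lt (iInf₂_le s ⟨hs.1, hs.2.trans hr.2⟩) (lt_of_le_of_lt ?_ hsc)
  refine ENNReal.div_le_div_right (hContent_mono (image_mono (inter_subset_inter_left _ ?_))) _
  exact ball_subset_ball' (by rw [mem_ball] at hy; linarith)

lemma nhdsGT_zero_hasBasis_one_div :
    (𝓝[>] (0 : ℝ)).HasBasis (fun _ : ℕ => True) fun j => Ioo 0 (1 / (j + 1)) :=
  (nhdsGT_basis 0).to_hasBasis
    (fun _ hε => (exists_nat_one_div_lt hε).imp fun _ hj => ⟨trivial, Ioo_subset_Ioo_right hj.le⟩)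
    fun _ _ => ⟨_, Nat.one_div_pos_of_nat, subset_rfl⟩

lemma measurable_lowerDensity (n : ℕ) (f : EucSp k → X) (A : Set (EucSp k)) :
    Measurable (lowerDensity n f A) := by
  rw [show lowerDensity n f A = _ from
    funext fun x => nhdsGT_zero_hasBasis_one_div.liminf_eq_iSup_iInf]
  exact Measurable.iSup fun j => Measurable.iSup fun _ =>
    (upperSemicontinuous_iInf_densityRatio n f A _).measurable

lemma lowerDensity_zero (f : EucSp k → X) (A : Set (EucSp k)) (x : EucSp k) :
    lowerDensity 0 f A x = ∞ := by
  simp [lowerDensity, hContent_zero, ENNReal.top_div, unitBallVol_ne_top]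

end LowerDensity

/-- `ω_n (√(n+m)/2)^n`, where `√(n+m)/2` is the circumradius of the unit cube of `ℝ^{n+m}`. -/
def cubeConst (n m : ℕ) : ℝ≥0∞ := unitBallVol n / 2 ^ n * ((n + m : ℕ) : ℝ≥0∞) ^ ((n : ℝ) / 2)

lemma cubeConst_ne_zero (n m : ℕ) : cubeConst n m ≠ 0 := by
  refine mul_ne_zero (ENNReal.div_ne_zero.2 ⟨(unitBallVol_pos n).ne', by simp⟩) ?_
  rcases eq_or_ne n 0 with rfl | hn
  · simp
  · exact (ENNReal.rpow_pos (by exact_mod_cast Nat.pos_of_ne_zero (by omega)) (by simp)).ne'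

lemma cubeConst_ne_top (n m : ℕ) : cubeConst n m ≠ ∞ :=
  ENNReal.mul_ne_top (ENNReal.div_ne_top (unitBallVol_ne_top n) (by simp))
    (ENNReal.rpow_ne_top_of_nonneg (by positivity) (by simp))

lemma unitBallVol_mul_ofReal_pow_mul_ofReal_pow {n m : ℕ} (x : EucSp (n + m)) (d : ℝ) :
    unitBallVol n * ENNReal.ofReal (√(n + m : ℕ) / 2 * d) ^ n * ENNReal.ofReal d ^ m =
      cubeConst n m * volume (openCube x d) := by
  have hsqrt : ENNReal.ofReal √(n + m : ℕ) ^ n = ((n + m : ℕ) : ℝ≥0∞) ^ ((n : ℝ) / 2) := by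
    rw [← ENNReal.ofReal_pow (Real.sqrt_nonneg _), Real.sqrt_eq_rpow, ← Real.rpow_mul_natCast
      (Nat.cast_nonneg _), ← ENNReal.ofReal_rpow_of_nonneg (Nat.cast_nonneg _) (by positivity),
      ENNReal.ofReal_natCast]
    ring_nf
  rw [cubeConst, volume_openCube, ENNReal.ofReal_mul (by positivity),
    ENNReal.ofReal_div_of_pos two_pos, ENNReal.ofReal_ofNat, div_eq_mul_inv, div_eq_mul_inv,
    mul_pow, mul_pow, ENNReal.inv_pow, hsqrt, pow_add]
  ring

section LocalEstimate

variable {n m : ℕ} {X : Type*} [PseudoEMetricSpace X] {f : EucSp (n + m) → X}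
  {Q A : Set (EucSp (n + m))} {x : EucSp (n + m)} {δ : ℝ≥0∞} {k : ℕ}

lemma hContent_image_openCube_mul_le (hN : n + m ≠ 0) (hAm : MeasurableSet A)
    (hA : ∀ y ∈ A, k * δ ≤ lowerDensity n f Q y) {d : ℝ} (hd : 0 < d) (hdQ : openCube x d ⊆ Q)
    (hratio : densityRatio n f Q x (√(n + m : ℕ) / 2 * d) < k * δ + δ)
    (hdiff : k * volume (Aᶜ ∩ openCube x d) ≤ volume (openCube x d)) :
    hContent n (f '' openCube x d) * ENNReal.ofReal d ^ m ≤
      cubeConst n m * ∫⁻ y in openCube x d, (lowerDensity n f Q y + 2 * δ) := by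
  set S := openCube x d
  set g := lowerDensity n f Q
  set r := √(n + m : ℕ) / 2 * d
  have hr : 0 < r := mul_pos (half_sqrt_natCast_pos hN) hd
  have hball : hContent n (f '' S) ≤ (k * δ + δ) * (unitBallVol n * ENNReal.ofReal r ^ n) :=
    (hContent_mono (image_mono (subset_inter (openCube_subset_ball hN x d) hdQ))).trans
      ((ENNReal.div_le_iff (mul_ne_zero (unitBallVol_pos n).ne'
        (pow_ne_zero _ (ENNReal.ofReal_pos.2 hr).ne'))
        (ENNReal.mul_ne_top (unitBallVol_ne_top n) (by simp))).1 hratio.le)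
  have hlevel : k * δ * volume (S ∩ A) ≤ ∫⁻ y in S, g y :=
    calc k * δ * volume (S ∩ A) = ∫⁻ _ in S ∩ A, k * δ := (setLIntegral_const _ _).symm
      _ ≤ ∫⁻ y in S ∩ A, g y :=
          setLIntegral_mono' ((isOpen_openCube x d).measurableSet.inter hAm) fun y hy => hA y hy.2
      _ ≤ ∫⁻ y in S, g y := lintegral_mono_set inter_subset_left
  have hcenter : k * δ * volume S ≤ (∫⁻ y in S, g y) + δ * volume S :=
    calc k * δ * volume S ≤ k * δ * (volume (S ∩ A) + volume (S \ A)) :=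
          mul_le_mul_right (measure_le_inter_add_sdiff _ _ _) _
      _ = k * δ * volume (S ∩ A) + δ * (k * volume (Aᶜ ∩ S)) := by
          rw [sdiff_eq_compl_inter]; ring
      _ ≤ (∫⁻ y in S, g y) + δ * volume S := add_le_add hlevel (mul_le_mul_right hdiff δ)
  calc hContent n (f '' S) * ENNReal.ofReal d ^ m
      ≤ (k * δ + δ) * (unitBallVol n * ENNReal.ofReal r ^ n) * ENNReal.ofReal d ^ m :=
        mul_le_mul_left hball _
    _ = cubeConst n m * (k * δ * volume S + δ * volume S) := by
        rw [mul_assoc, unitBallVol_mul_ofReal_pow_mul_ofReal_pow x d]; ring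
    _ ≤ cubeConst n m * ((∫⁻ y in S, g y) + δ * volume S + δ * volume S) :=
        mul_le_mul_right (add_le_add hcenter le_rfl) _
    _ = cubeConst n m * ∫⁻ y in S, (g y + 2 * δ) := by
        rw [lintegral_add_right _ measurable_const, setLIntegral_const]; ring

lemma frequently_hContent_image_openCube_mul_le (hN : n + m ≠ 0) (hQ : Q ∈ 𝓝 x)
    (hAm : MeasurableSet A) (hA : ∀ y ∈ A, k * δ ≤ lowerDensity n f Q y)
    (hx : lowerDensity n f Q x < k * δ + δ)
    (hdens : Tendsto (fun r => volume (Aᶜ ∩ closedBall x r) / volume (closedBall x r)) (𝓝[>] 0)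
      (𝓝 0)) :
    ∃ᶠ d in 𝓝[>] 0, closedCube x d ⊆ Q ∧
      hContent n (f '' openCube x d) * ENNReal.ofReal d ^ m ≤
        cubeConst n m * ∫⁻ y in openCube x d, (lowerDensity n f Q y + 2 * δ) := by
  have hc := half_sqrt_natCast_pos hN
  obtain ⟨ρ, hρ, hρQ⟩ := Metric.mem_nhds_iff.1 hQ
  have hratio := frequently_nhdsGT_zero_mul_left hc (frequently_lt_of_liminf_lt (h := hx))
  have hdiff := ENNReal.eventually_mul_le_of_tendsto_div_zero
    (tendsto_volume_inter_openCube_div hN hdens) (ENNReal.natCast_ne_top k)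
  have hsmall := eventually_nhdsGT_zero_mul_left hc (Ioo_mem_nhdsGT hρ)
  refine (hratio.and_eventually (hdiff.and (hsmall.and self_mem_nhdsWithin))).mono ?_
  rintro d ⟨hratio, hdiff, ⟨-, hdρ⟩, hd⟩
  have hcube : closedCube x d ⊆ Q :=
    (closedCube_subset_closedBall x hd.le).trans ((closedBall_subset_ball hdρ).trans hρQ)
  exact ⟨hcube, hContent_image_openCube_mul_le hN hAm hA hd
    ((openCube_subset_closedCube x d).trans hcube) hratio hdiff⟩

end LocalEstimate

section Covering

variable {N n m : ℕ} {X : Type*} [PseudoEMetricSpace X] {f : EucSp N → X} {Q : Set (EucSp N)}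

lemma hnmContent_le_tsum (hn : n ≠ 0) (hN : N ≠ 0) {ι : Type*} [Countable ι] (c : ι → EucSp N)
    (d : ι → ℝ) (hd : ∀ i, 0 ≤ d i) (hQ : ∀ i, openCube (c i) (d i) ⊆ Q)
    (hdisj : Pairwise (Function.onFun Disjoint fun i => openCube (c i) (d i)))
    (hcov : volume (Q \ ⋃ i, openCube (c i) (d i)) = 0) :
    hnmContent n m f Q ≤
      ∑' i, hContent n (f '' openCube (c i) (d i)) * ENNReal.ofReal (d i) ^ m := by
  obtain ⟨e, he⟩ := Countable.exists_injective_nat ι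
  set p : ℕ → EucSp N × ℝ := Function.extend e (fun i => (c i, d i)) 0
  have hp : ∀ i, p (e i) = (c i, d i) := he.extend_apply _ _
  have hcases : ∀ j, (∃ i, e i = j) ∨ p j = 0 := fun j =>
    or_iff_not_imp_left.2 fun hj => Function.extend_apply' _ _ _ hj
  have hempty : openCube (0 : EucSp N) 0 = ∅ := openCube_zero hN 0
  set F : EucSp N × ℝ → ℝ≥0∞ := fun q => hContent n (f '' openCube q.1 q.2) * ENNReal.ofReal q.2 ^ m
  have hsupp : Function.support (F ∘ p) ⊆ range e := fun j hj =>
    (hcases j).resolve_right fun h => hj (by simp [F, h, hempty, hContent_empty hn])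
  have hnonneg : ∀ j, 0 ≤ (p j).2 := fun j => by
    rcases hcases j with ⟨i, rfl⟩ | h
    · simpa [hp] using hd i
    · simp [h]
  have hsub : ∀ j, openCube (p j).1 (p j).2 ⊆ Q := fun j => by
    rcases hcases j with ⟨i, rfl⟩ | h
    · simpa [hp] using hQ i
    · simp [h, hempty]
  have hdisj' : Pairwise (Function.onFun Disjoint fun j => openCube (p j).1 (p j).2) := by
    intro j j' hjj'
    rcases hcases j with ⟨i, rfl⟩ | h
    · rcases hcases j' with ⟨i', rfl⟩ | h'
      · change Disjoint (openCube (p (e i)).1 (p (e i)).2) (openCube (p (e i')).1 (p (e i')).2)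
        rw [hp, hp]
        exact hdisj (he.ne_iff.1 hjj')
      · simp [Function.onFun, h', hempty]
    · simp [Function.onFun, h, hempty]
  have hcov' : volume (Q \ ⋃ j, openCube (p j).1 (p j).2) = 0 :=
    measure_mono_null (sdiff_subset_sdiff_right (iUnion_subset fun i =>
      subset_iUnion_of_subset (e i) (by simp [hp]))) hcov
  calc hnmContent n m f Q ≤ ∑' j, F (p j) :=
        iInf₂_le_of_le (fun j => (p j).1) (fun j => (p j).2)
          (iInf₂_le_of_le hnonneg hsub (iInf₂_le hdisj' hcov'))
    _ = ∑' i, F (c i, d i) := by simp only [← hp]; exact (he.tsum_eq hsupp).symm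

lemma exists_disjoint_closedCube_covering_ae (hN : N ≠ 0) {s : Set (EucSp N)}
    {P : EucSp N → ℝ → Prop} (hP : ∀ x ∈ s, ∃ᶠ d in 𝓝[>] 0, P x d) :
    ∃ u : Set (EucSp N × ℝ), u.Countable ∧ (∀ p ∈ u, 0 < p.2 ∧ P p.1 p.2) ∧
      u.PairwiseDisjoint (fun p => closedCube p.1 p.2) ∧
      volume (s \ ⋃ p ∈ u, closedCube p.1 p.2) = 0 := by
  have hc := half_sqrt_natCast_pos hN
  set C : ℝ≥0 := (ENNReal.ofReal ((3 * (√N / 2)) ^ N) * unitBallVol N).toNNReal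
  have hC : (C : ℝ≥0∞) = ENNReal.ofReal ((3 * (√N / 2)) ^ N) * unitBallVol N :=
    ENNReal.coe_toNNReal (ENNReal.mul_ne_top ENNReal.ofReal_ne_top (unitBallVol_ne_top N))
  obtain ⟨u, hut, hu, hudisj, hucov⟩ := Vitali.exists_disjoint_covering_ae volume s
    {p | 0 < p.2 ∧ P p.1 p.2} C (fun p => √N / 2 * p.2) Prod.fst (fun p => closedCube p.1 p.2)
    (fun p hp => closedCube_subset_closedBall p.1 hp.1.le)
    (fun p hp => by
      rw [← mul_assoc, volume_closedBall_mul_eq p.1 (by positivity) hp.1.le, hC]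
      exact mul_le_mul_right (measure_mono (openCube_subset_closedCube _ _)) _)
    (fun p hp => ⟨p.1, interior_maximal (openCube_subset_closedCube _ _) (isOpen_openCube _ _)
      (mem_openCube_self _ hp.1)⟩)
    (fun p _ => isClosed_closedCube _ _)
    (fun x hx ε hε => by
      obtain ⟨d, hPd, ⟨-, hdε⟩, hd⟩ := ((hP x hx).and_eventually
        ((eventually_nhdsGT_zero_mul_left hc (Ioc_mem_nhdsGT hε)).and self_mem_nhdsWithin)).exists
      exact ⟨(x, d), ⟨hd, hPd⟩, hdε, rfl⟩)
  exact ⟨u, hu, hut, hudisj, hucov⟩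

lemma hnmContent_le_setLIntegral (hn : n ≠ 0) (hN : N ≠ 0) {h : EucSp N → ℝ≥0∞}
    (hgood : ∀ᵐ x, x ∈ Q → ∃ᶠ d in 𝓝[>] 0, closedCube x d ⊆ Q ∧
      hContent n (f '' openCube x d) * ENNReal.ofReal d ^ m ≤ ∫⁻ y in openCube x d, h y) :
    hnmContent n m f Q ≤ ∫⁻ y in Q, h y := by
  set s := {x ∈ Q | ∃ᶠ d in 𝓝[>] 0, closedCube x d ⊆ Q ∧
    hContent n (f '' openCube x d) * ENNReal.ofReal d ^ m ≤ ∫⁻ y in openCube x d, h y}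
  have hs : volume (Q \ s) = 0 :=
    measure_eq_zero_iff_ae_notMem.2 (hgood.mono fun x hx hxs => hxs.2 ⟨hxs.1, hx hxs.1⟩)
  obtain ⟨u, hu, hut, hudisj, hucov⟩ :=
    exists_disjoint_closedCube_covering_ae hN fun x (hx : x ∈ s) => hx.2
  have : Countable u := hu.to_subtype
  have hcov : volume (Q \ ⋃ p : u, openCube p.1.1 p.1.2) = 0 := by
    refine measure_mono_null (fun x ⟨hxQ, hxu⟩ => ?_) (measure_union_null (measure_union_null hs
      hucov) (measure_iUnion_null fun p : u => volume_closedCube_diff_openCube p.1.1 p.1.2))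
    by_cases hxs : x ∈ s
    · by_cases hxc : x ∈ ⋃ p ∈ u, closedCube p.1 p.2
      · obtain ⟨p, hp, hxp⟩ := mem_iUnion₂.1 hxc
        exact Or.inr (mem_iUnion.2 ⟨⟨p, hp⟩, hxp, fun hxo => hxu (mem_iUnion.2 ⟨⟨p, hp⟩, hxo⟩)⟩)
      · exact Or.inl (Or.inr ⟨hxs, hxc⟩)
    · exact Or.inl (Or.inl ⟨hxQ, hxs⟩)
  have hdisj : Pairwise (Function.onFun Disjoint fun p : u => openCube p.1.1 p.1.2) :=
    fun p q hpq => (hudisj p.2 q.2 (Subtype.val_injective.ne hpq)).mono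
      (openCube_subset_closedCube _ _) (openCube_subset_closedCube _ _)
  have hsub : ∀ p : u, openCube p.1.1 p.1.2 ⊆ Q := fun p =>
    (openCube_subset_closedCube _ _).trans (hut p p.2).2.1
  calc hnmContent n m f Q
      ≤ ∑' p : u, hContent n (f '' openCube p.1.1 p.1.2) * ENNReal.ofReal p.1.2 ^ m :=
        hnmContent_le_tsum hn hN _ _ (fun p => (hut p p.2).1.le) hsub hdisj hcov
    _ ≤ ∑' p : u, ∫⁻ y in openCube p.1.1 p.1.2, h y :=
        ENNReal.tsum_le_tsum fun p => (hut p p.2).2.2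
    _ = ∫⁻ y in ⋃ p : u, openCube p.1.1 p.1.2, h y :=
        (lintegral_iUnion (fun p => (isOpen_openCube _ _).measurableSet) hdisj h).symm
    _ ≤ ∫⁻ y in Q, h y := lintegral_mono_set (iUnion_subset hsub)

end Covering

section Main

variable {n m : ℕ} {X : Type*} [PseudoEMetricSpace X]

lemma hnmContent_closedCube_le_lintegral_add (hn : n ≠ 0) (a : EucSp (n + m)) (D : ℝ)
    (f : EucSp (n + m) → X)
    (hfin : ∫⁻ x in closedCube a D, lowerDensity n f (closedCube a D) x ≠ ∞) {δ : ℝ≥0∞}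
    (hδ : δ ≠ 0) :
    hnmContent n m f (closedCube a D) ≤
      ∫⁻ y in closedCube a D, cubeConst n m * (lowerDensity n f (closedCube a D) y + 2 * δ) := by
  set Q := closedCube a D
  set g := lowerDensity n f Q
  have hg : Measurable g := measurable_lowerDensity n f Q
  set A : ℕ → Set (EucSp (n + m)) := fun k => {y | k * δ ≤ g y}
  have hAm : ∀ k, MeasurableSet (A k) := fun k => measurableSet_le measurable_const hg
  have hfinite : ∀ᵐ x, x ∈ Q → g x < ∞ := ae_imp_of_ae_restrict (ae_lt_top hg hfin)
  have hinterior : ∀ᵐ x, x ∈ Q → x ∈ openCube a D :=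
    (measure_eq_zero_iff_ae_notMem.1 (volume_closedCube_diff_openCube a D)).mono
      fun x hx hxQ => by_contra fun h => hx ⟨hxQ, h⟩
  have hdens : ∀ᵐ x, ∀ k, Tendsto (fun r => volume ((A k)ᶜ ∩ closedBall x r) /
      volume (closedBall x r)) (𝓝[>] 0) (𝓝 ((A k)ᶜ.indicator 1 x)) :=
    ae_all_iff.2 fun k =>
      Besicovitch.ae_tendsto_measure_inter_div_of_measurableSet volume (hAm k).compl
  refine hnmContent_le_setLIntegral hn (by omega) ?_
  filter_upwards [hfinite, hinterior, hdens] with x hxfin hxint hxdens hxQ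
  obtain ⟨k, hk, hk'⟩ := ENNReal.exists_nat_mul_le_lt_add (hxfin hxQ).ne hδ
  have hQx : Q ∈ 𝓝 x := mem_of_superset ((isOpen_openCube a D).mem_nhds (hxint hxQ))
    (openCube_subset_closedCube a D)
  refine (frequently_hContent_image_openCube_mul_le (by omega) hQx (hAm k) (fun y hy => hy) hk'
    ?_).mono fun d hd =>
      ⟨hd.1, hd.2.trans_eq (lintegral_const_mul' _ _ (cubeConst_ne_top n m)).symm⟩
  simpa [A, hk] using hxdens k

lemma hnmContent_closedCube_le (a : EucSp (n + m)) {D : ℝ} (hD : 0 < D)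
    (f : EucSp (n + m) → X) :
    hnmContent n m f (closedCube a D) ≤
      cubeConst n m * ∫⁻ x in closedCube a D, lowerDensity n f (closedCube a D) x := by
  set I := ∫⁻ x in closedCube a D, lowerDensity n f (closedCube a D) x
  have hvol : volume (closedCube a D) ≠ 0 := by simp [volume_closedCube, hD]
  have hvol' : volume (closedCube a D) ≠ ∞ := by simp [volume_closedCube]
  rcases eq_or_ne n 0 with rfl | hn
  · simp [I, lowerDensity_zero, ENNReal.top_mul hvol, ENNReal.mul_top (cubeConst_ne_zero 0 m)]
  rcases eq_or_ne I ∞ with hI | hI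
  · simp [hI, ENNReal.mul_top (cubeConst_ne_zero n m)]
  have hlim : Tendsto (fun δ => cubeConst n m * (I + 2 * δ * volume (closedCube a D))) (𝓝[>] 0)
      (𝓝 (cubeConst n m * I)) := by
    have : Tendsto (fun δ => cubeConst n m * (I + 2 * δ * volume (closedCube a D))) (𝓝 0)
        (𝓝 (cubeConst n m * (I + 2 * 0 * volume (closedCube a D)))) :=
      ENNReal.Tendsto.const_mul (tendsto_const_nhds.add (ENNReal.Tendsto.mul_const
        (ENNReal.Tendsto.const_mul tendsto_id (Or.inr ENNReal.ofNat_ne_top)) (Or.inr hvol')))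
        (Or.inr (cubeConst_ne_top n m))
    simpa using this.mono_left nhdsWithin_le_nhds
  refine ge_of_tendsto hlim (eventually_nhdsWithin_of_forall fun δ (hδ : 0 < δ) => ?_)
  calc hnmContent n m f (closedCube a D)
      ≤ ∫⁻ y in closedCube a D, cubeConst n m * (lowerDensity n f (closedCube a D) y + 2 * δ) :=
        hnmContent_closedCube_le_lintegral_add hn a D f hI hδ.ne'
    _ = cubeConst n m * (I + 2 * δ * volume (closedCube a D)) := by
        rw [lintegral_const_mul' _ _ (cubeConst_ne_top n m), lintegral_add_right _ measurable_const,
          setLIntegral_const]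

end Main

theorem stmt11_general {n m : ℕ} {X : Type*} [MetricSpace X]
    (a : EucSp (n + m)) (D : ℝ) (hD : 0 < D) (Q : Set (EucSp (n + m)))
    (hQ : Q = closedCube a D)
    (f : EucSp (n + m) → X) :
    hnmContent n m f Q ≤
        unitBallVol n / 2 ^ n * ((n + m : ℕ) : ℝ≥0∞) ^ ((n : ℝ) / 2) *
          ∫⁻ x in Q, lowerDensity n f Q x ∧
      unitBallVol n / 2 ^ n * ((n + m : ℕ) : ℝ≥0∞) ^ ((n : ℝ) / 2) *
          ∫⁻ x in Q, lowerDensity n f Q x ≤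
        unitBallVol n / 2 ^ n * ((n + m : ℕ) : ℝ≥0∞) ^ ((n : ℝ) / 2) *
          ∫⁻ x in Q, upperDensity n f Q x := by
  subst hQ
  exact ⟨hnmContent_closedCube_le a hD f,
    mul_le_mul_right (lintegral_mono fun x => liminf_le_limsup) _⟩

/-- Proposition elllem2: for a Lipschitz map `f : Q → X` on a cube
`Q ⊆ ℝ^{n+m}`,
`ℋ^{n,m}_∞(f,Q) ≤ (ω_n/2^n)(n+m)^{n/2} ∫_Q Θ_*^n(f,x) dx
               ≤ (ω_n/2^n)(n+m)^{n/2} ∫_Q Θ^{*n}(f,x) dx`. -/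
theorem stmt11 {n m : ℕ} {X : Type*} [MetricSpace X]
    (a : EucSp (n + m)) (D : ℝ) (hD : 0 < D) (Q : Set (EucSp (n + m)))
    (hQ : Q = closedCube a D)
    (f : EucSp (n + m) → X) (hf : ∃ L : ℝ≥0, LipschitzOnWith L f Q) :
    hnmContent n m f Q ≤
        unitBallVol n / 2 ^ n * ((n + m : ℕ) : ℝ≥0∞) ^ ((n : ℝ) / 2) *
          ∫⁻ x in Q, lowerDensity n f Q x ∧
      unitBallVol n / 2 ^ n * ((n + m : ℕ) : ℝ≥0∞) ^ ((n : ℝ) / 2) *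
          ∫⁻ x in Q, lowerDensity n f Q x ≤
        unitBallVol n / 2 ^ n * ((n + m : ℕ) : ℝ≥0∞) ^ ((n : ℝ) / 2) *
          ∫⁻ x in Q, upperDensity n f Q x :=
  stmt11_general a D hD Q hQ f
end
end

section
/- Let f : ℝ^{n+m} → ℝ^n be an L-Lipschitz map which is differentiable at a point x with |J^n f|(x) = 0 (equivalently rank Df(x) < n). Then Θ_*^n(f,x) = Θ^{*n}(f,x) = 0. -/
open MeasureTheory Metric Set Filter
open scoped ENNReal NNReal Topology

noncomputable section

/-! Since `rank Df(x) < n`, some unit vector `v` is orthogonal to the range of `Df(x)`. Given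
`ε > 0`, for small `r` the image `f(B(x,r))` lies in the slab of points `z` with
`‖z - f x‖ ≤ (‖Df(x)‖ + ε) r` and `|⟪z - f x, v⟫| ≤ ε r`. In coordinates adapted to `v` this slab
is covered by `O(ε^{1-n})` cubes of side `2εr`, so its Hausdorff content is `O(ε rⁿ)`. Hence
`Θ^{*n}(f,x) = O(ε)` for every `ε > 0`. -/

section HausdorffContent

variable {X : Type*} [PseudoEMetricSpace X] {n : ℕ}

lemma hContent_image_le_of_lipschitzWith_one {Y : Type*} [PseudoEMetricSpace Y] {g : X → Y}
    (hg : LipschitzWith 1 g) (E : Set X) : hContent n (g '' E) ≤ hContent n E := by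
  refine le_iInf₂ fun A hA => iInf₂_le_of_le (fun i => g '' A i) ?_ ?_
  · simpa only [image_iUnion] using image_mono hA
  · gcongr with i
    exact (hg.ediam_image_le (A i)).trans_eq (one_mul _)

lemma hContent_le_tsum {ι : Type*} [Countable ι] (hn : n ≠ 0) {E : Set X} (s : ι → Set X)
    (hE : E ⊆ ⋃ i, s i) :
    hContent n E ≤ unitBallVol n / 2 ^ n * ∑' i, ediam (s i) ^ n := by
  have := Encodable.ofCountable ι
  refine iInf₂_le_of_le (fun k => ⋃ i ∈ Encodable.decode₂ ι k, s i) ?_ (le_of_eq ?_)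
  · rwa [Encodable.iUnion_decode₂]
  · exact congrArg _ (tsum_iUnion_decode₂ (fun A => ediam A ^ n) (by simp [hn]) s)

lemma hContent_le_card_mul {ι : Type*} (hn : n ≠ 0) {E : Set X} (I : Finset ι) (s : ι → Set X)
    (hE : E ⊆ ⋃ i ∈ I, s i) {D : ℝ≥0∞} (hD : ∀ i ∈ I, ediam (s i) ≤ D) :
    hContent n E ≤ unitBallVol n / 2 ^ n * (I.card * D ^ n) := by
  refine (hContent_le_tsum hn (fun i : I => s i) (by simpa [iUnion_subtype] using hE)).trans ?_
  rw [tsum_fintype, Finset.sum_coe_sort I fun i => ediam (s i) ^ n]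
  gcongr
  simpa using Finset.sum_le_card_nsmul I _ _ fun i hi => pow_le_pow_left₀ bot_le (hD i hi) n

end HausdorffContent

lemma ediam_closedCube_le {k : ℕ} (c : EucSp k) {d : ℝ} (hd : 0 ≤ d) :
    ediam (closedCube c d) ≤ ENNReal.ofReal (d * √k) := by
  refine ediam_le fun y hy z hz => ?_
  rw [edist_dist]
  gcongr
  have hcoord (i : Fin k) : dist (y i) (z i) ≤ d := by
    have := abs_sub_le (y i) (c i) (z i)
    have := hy i
    have := hz i
    rw [Real.dist_eq, abs_sub_comm (c i)] at *
    linarith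
  calc dist y z = √(∑ i, dist (y i) (z i) ^ 2) := EuclideanSpace.dist_eq y z
    _ ≤ √(∑ _i : Fin k, d ^ 2) := by gcongr with i; exact hcoord i
    _ = d * √k := by
      rw [Finset.sum_const, Finset.card_univ, Fintype.card_fin, nsmul_eq_mul,
        Real.sqrt_mul (Nat.cast_nonneg k), Real.sqrt_sq hd, mul_comm]

lemma abs_sub_mul_round_div_le (y : ℝ) {d : ℝ} (hd : 0 < d) :
    |y - d * round (y / d)| ≤ d / 2 := by
  calc |y - d * round (y / d)| = d * |y / d - round (y / d)| := by
        rw [← abs_of_pos hd, ← abs_mul, abs_of_pos hd, mul_sub, mul_div_cancel₀ y hd.ne']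
    _ ≤ d * (1 / 2) := by gcongr; exact abs_sub_round _
    _ = d / 2 := by ring

lemma abs_round_le_of_abs_add_half_le {y : ℝ} {N : ℕ} (h : |y| + 1 / 2 ≤ N) : |round y| ≤ N := by
  have : |(round y : ℝ)| ≤ N := calc
    |(round y : ℝ)| = |y - (y - round y)| := by rw [sub_sub_cancel]
    _ ≤ |y| + |y - round y| := abs_sub _ _
    _ ≤ |y| + 1 / 2 := by gcongr; exact abs_sub_round y
    _ ≤ N := h
  exact_mod_cast this

lemma card_piFinset_ite_singleton_Icc (n N : ℕ) (i₀ : Fin n) :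
    (Fintype.piFinset fun i : Fin n =>
      if i = i₀ then ({0} : Finset ℤ) else Finset.Icc (-N : ℤ) N).card = (2 * N + 1) ^ (n - 1) := by
  rw [Fintype.card_piFinset]
  simp only [apply_ite, Finset.prod_ite, Finset.filter_ne', Finset.card_singleton,
    Finset.prod_const_one, Int.card_Icc, one_mul, Finset.prod_const,
    Finset.card_erase_of_mem (Finset.mem_univ _), Finset.card_univ, Fintype.card_fin]
  congr 1
  omega

lemma hContent_box_le {n : ℕ} (i₀ : Fin n) {a d : ℝ} (hd : 0 < d) {N : ℕ}
    (hN : a + d / 2 ≤ N * d) :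
    hContent n {w : EucSp n | (∀ i, |w i| ≤ a) ∧ |w i₀| ≤ d / 2} ≤
      unitBallVol n / 2 ^ n * ((2 * N + 1) ^ (n - 1) * ENNReal.ofReal (d * √n) ^ n) := by
  set I := Fintype.piFinset fun i : Fin n =>
    if i = i₀ then ({0} : Finset ℤ) else Finset.Icc (-N : ℤ) N
  have hcover : {w : EucSp n | (∀ i, |w i| ≤ a) ∧ |w i₀| ≤ d / 2} ⊆
      ⋃ k ∈ I, closedCube (WithLp.toLp 2 fun i => d * k i) d := by
    rintro w ⟨hw, hw₀⟩
    refine mem_iUnion₂.2 ⟨fun i => if i = i₀ then 0 else round (w i / d), ?_, fun i => ?_⟩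
    · refine Fintype.mem_piFinset.2 fun i => ?_
      split_ifs with hi
      · exact Finset.mem_singleton_self 0
      refine Finset.mem_Icc.2 (abs_le.1 (abs_round_le_of_abs_add_half_le ?_))
      rw [abs_div, abs_of_pos hd, div_add' _ _ _ hd.ne', div_le_iff₀ hd]
      linarith [hw i]
    · by_cases hi : i = i₀
      · subst hi
        simpa using hw₀
      · simpa [hi] using abs_sub_mul_round_div_le (w i) hd
  have hcard : ((2 * N + 1) ^ (n - 1) : ℝ≥0∞) = I.card := by
    rw [card_piFinset_ite_singleton_Icc]
    norm_cast
  rw [hcard]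
  exact hContent_le_card_mul (Fin.pos i₀).ne' I _ hcover fun k _ => ediam_closedCube_le _ hd.le

lemma exists_orthonormalBasis_apply_eq {ι E : Type*} [Fintype ι] [NormedAddCommGroup E]
    [InnerProductSpace ℝ E] [FiniteDimensional ℝ E] (hcard : Module.finrank ℝ E = Fintype.card ι)
    {v : E} (hv : ‖v‖ = 1) (i₀ : ι) : ∃ b : OrthonormalBasis ι ℝ E, b i₀ = v := by
  have hortho : Orthonormal ℝ (({i₀} : Set ι).domRestrict fun _ => v) := by
    refine orthonormal_iff_ite.2 fun i j => ?_
    rw [Subsingleton.elim i j, if_pos rfl]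
    simp [hv]
  obtain ⟨b, hb⟩ := hortho.exists_orthonormalBasis_extension_of_card_eq hcard
  exact ⟨b, hb i₀ rfl⟩

lemma dim_ne_zero_of_norm_eq_one {n : ℕ} {v : EucSp n} (hv : ‖v‖ = 1) : n ≠ 0 := by
  rintro rfl
  simp [Subsingleton.elim v 0] at hv

def slab {F : Type*} [NormedAddCommGroup F] [InnerProductSpace ℝ F] (p v : F) (a δ : ℝ) : Set F :=
  {z | ‖z - p‖ ≤ a ∧ |inner ℝ (z - p) v| ≤ δ}

lemma slab_subset_image_box {n : ℕ} {v : EucSp n} (hv : ‖v‖ = 1) (p : EucSp n) (a δ : ℝ)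
    (i₀ : Fin n) : ∃ ψ : EucSp n → EucSp n, Isometry ψ ∧
      slab p v a δ ⊆ ψ '' {w | (∀ i, |w i| ≤ a) ∧ |w i₀| ≤ δ} := by
  obtain ⟨b, hb⟩ := exists_orthonormalBasis_apply_eq (by simp) hv i₀
  refine ⟨fun w => b.repr.symm w + p,
    (IsometryEquiv.addRight p).isometry.comp b.repr.symm.isometry, ?_⟩
  rintro z ⟨hz, hzv⟩
  refine ⟨b.repr (z - p), ⟨fun i => ?_, ?_⟩, by simp⟩
  · calc |b.repr (z - p) i| ≤ ‖b.repr (z - p)‖ := by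
          simpa using PiLp.norm_apply_le (b.repr (z - p)) i
      _ = ‖z - p‖ := b.repr.norm_map _
      _ ≤ a := hz
  · rwa [b.repr_apply_apply, hb, real_inner_comm]

lemma hContent_slab_le {n : ℕ} {v : EucSp n} (hv : ‖v‖ = 1) (p : EucSp n) {a δ : ℝ} (ha : 0 ≤ a)
    (hδ : 0 < δ) :
    hContent n (slab p v a δ) ≤
      unitBallVol n * ENNReal.ofReal ((2 * a + 10 * δ) ^ (n - 1) * (2 * δ) * √n ^ n) := by
  have hn := dim_ne_zero_of_norm_eq_one hv
  have i₀ : Fin n := ⟨0, Nat.pos_of_ne_zero hn⟩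
  obtain ⟨ψ, hψ, hsub⟩ := slab_subset_image_box hv p a δ i₀
  set N := ⌈a / (2 * δ)⌉₊ + 1
  have hceil_le := mul_le_mul_of_nonneg_right (Nat.le_ceil (a / (2 * δ)))
    (by positivity : (0 : ℝ) ≤ 2 * δ)
  have hceil_lt := mul_lt_mul_of_pos_right (Nat.ceil_lt_add_one (by positivity : 0 ≤ a / (2 * δ)))
    (by positivity : (0 : ℝ) < 2 * δ)
  rw [div_mul_cancel₀ a (by positivity)] at hceil_le
  rw [add_mul, div_mul_cancel₀ a (by positivity)] at hceil_lt
  have hN : a + 2 * δ / 2 ≤ N * (2 * δ) := by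
    push_cast [N]
    linarith
  have hcount : (2 * N + 1 : ℝ) * (2 * δ) ≤ 2 * a + 10 * δ := by
    push_cast [N]
    linarith
  have hbox := hContent_box_le i₀ (by positivity) hN
  rw [mul_div_cancel_left₀ δ two_ne_zero] at hbox
  calc hContent n (slab p v a δ)
      ≤ hContent n {w : EucSp n | (∀ i, |w i| ≤ a) ∧ |w i₀| ≤ δ} :=
        (hContent_mono hsub).trans (hContent_image_le_of_lipschitzWith_one hψ.lipschitz _)
    _ ≤ unitBallVol n * ((2 * N + 1) ^ (n - 1) * ENNReal.ofReal (2 * δ * √n) ^ n) :=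
        hbox.trans <| by
          gcongr
          exact ENNReal.div_le_of_le_mul (le_mul_of_one_le_right' (one_le_pow₀ one_le_two))
    _ = unitBallVol n * ENNReal.ofReal ((2 * N + 1 : ℝ) ^ (n - 1) * (2 * δ * √n) ^ n) := by
        rw [ENNReal.ofReal_mul (by positivity : (0 : ℝ) ≤ (2 * N + 1) ^ (n - 1)),
          ENNReal.ofReal_pow (by positivity), ENNReal.ofReal_pow (by positivity)]
        norm_cast
    _ ≤ unitBallVol n * ENNReal.ofReal ((2 * a + 10 * δ) ^ (n - 1) * (2 * δ) * √n ^ n) := by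
        rw [mul_pow, ← pow_sub_one_mul hn (2 * δ), ← mul_assoc, ← mul_assoc, ← mul_pow]
        gcongr

lemma det_mul_transpose_eq_zero_of_jacDet_eq_zero {n k : ℕ} {M : Matrix (Fin n) (Fin k) ℝ}
    (hJ : jacDet M = 0) : (M * M.transpose).det = 0 :=
  le_antisymm (Real.sqrt_eq_zero'.1 hJ)
    (by simpa using (Matrix.posSemidef_self_mul_conjTranspose M).det_nonneg)

lemma exists_norm_eq_one_forall_inner_toEuclideanLin_eq_zero {ι κ : Type*} [Fintype ι]
    [Fintype κ] [DecidableEq ι] [DecidableEq κ] {M : Matrix ι κ ℝ}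
    (h : (M * M.transpose).det = 0) :
    ∃ v : EuclideanSpace ℝ ι, ‖v‖ = 1 ∧ ∀ w, inner ℝ (M.toEuclideanLin w) v = 0 := by
  obtain ⟨u, hu0, hu⟩ := Matrix.exists_mulVec_eq_zero_iff.2 h
  have hmem : WithLp.toLp 2 u ∈ (LinearMap.range M.toEuclideanLin)ᗮ := by
    rw [LinearMap.orthogonal_range, ← LinearMap.ker_self_comp_adjoint,
      ← Matrix.toEuclideanLin_conjTranspose_eq_adjoint, LinearMap.mem_ker]
    simp [Matrix.mulVec_mulVec, hu]
  have hne : WithLp.toLp 2 u ≠ 0 := by simpa using hu0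
  refine ⟨‖WithLp.toLp 2 u‖⁻¹ • WithLp.toLp 2 u, norm_smul_inv_norm hne, fun w => ?_⟩
  exact (Submodule.mem_orthogonal _ _).1 (Submodule.smul_mem _ _ hmem) _
    (LinearMap.mem_range_self _ w)

lemma image_ball_subset_slab {E F : Type*} [NormedAddCommGroup E] [NormedSpace ℝ E]
    [NormedAddCommGroup F] [InnerProductSpace ℝ F] {f : E → F} {T : E →L[ℝ] F} {x : E}
    (hT : HasFDerivAt f T x) {v : F} (hv : ‖v‖ = 1) (hperp : ∀ w, inner ℝ (T w) v = 0) {ε : ℝ}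
    (hε : 0 < ε) : ∀ᶠ r in 𝓝[>] 0, f '' ball x r ⊆ slab (f x) v ((‖T‖ + ε) * r) (ε * r) := by
  obtain ⟨δ, hδ, hlin⟩ := Metric.eventually_nhds_iff.1 (hT.isLittleO.def hε)
  filter_upwards [Ioo_mem_nhdsGT hδ] with r hr
  rintro _ ⟨y, hy, rfl⟩
  have hyr : ‖y - x‖ ≤ r := by
    rw [← dist_eq_norm]
    exact (mem_ball.1 hy).le
  have herr : ‖f y - f x - T (y - x)‖ ≤ ε * r :=
    (hlin ((mem_ball.1 hy).trans hr.2)).trans (by gcongr)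
  constructor
  · calc ‖f y - f x‖ ≤ ‖T (y - x)‖ + ‖f y - f x - T (y - x)‖ :=
          norm_le_norm_add_norm_sub' _ _
      _ ≤ ‖T‖ * r + ε * r := by gcongr; exact T.le_opNorm_of_le hyr
      _ = (‖T‖ + ε) * r := by ring
  · calc |inner ℝ (f y - f x) v| = |inner ℝ (f y - f x - T (y - x)) v| := by
          rw [inner_sub_left (f y - f x), hperp, sub_zero]
      _ ≤ ‖f y - f x - T (y - x)‖ := by
          simpa [hv] using abs_real_inner_le_norm (f y - f x - T (y - x)) v
      _ ≤ ε * r := herr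

lemma upperDensity_le_of_eventually_image_ball_subset_slab {k n : ℕ} {f : EucSp k → EucSp n}
    {x : EucSp k} {v : EucSp n} (hv : ‖v‖ = 1) {a δ : ℝ} (ha : 0 ≤ a) (hδ : 0 < δ)
    (h : ∀ᶠ r in 𝓝[>] 0, f '' ball x r ⊆ slab (f x) v (a * r) (δ * r)) :
    upperDensity n f univ x ≤ ENNReal.ofReal ((2 * a + 10 * δ) ^ (n - 1) * (2 * δ) * √n ^ n) := by
  have hn := dim_ne_zero_of_norm_eq_one hv
  refine limsup_le_of_le (by isBoundedDefault) ?_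
  filter_upwards [h, self_mem_nhdsWithin] with r hr (hr0 : 0 < r)
  rw [inter_univ]
  refine ENNReal.div_le_of_le_mul ?_
  calc hContent n (f '' ball x r) ≤ hContent n (slab (f x) v (a * r) (δ * r)) := hContent_mono hr
    _ ≤ unitBallVol n *
          ENNReal.ofReal ((2 * (a * r) + 10 * (δ * r)) ^ (n - 1) * (2 * (δ * r)) * √n ^ n) :=
        hContent_slab_le hv _ (by positivity) (by positivity)
    _ = ENNReal.ofReal ((2 * a + 10 * δ) ^ (n - 1) * (2 * δ) * √n ^ n) *
          (unitBallVol n * ENNReal.ofReal r ^ n) := by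
        rw [← ENNReal.ofReal_pow hr0.le, mul_left_comm (ENNReal.ofReal _),
          ← ENNReal.ofReal_mul (by positivity), ← pow_sub_one_mul hn r,
          show 2 * (a * r) + 10 * (δ * r) = (2 * a + 10 * δ) * r by ring, mul_pow]
        ring_nf

theorem stmt19_general {n m : ℕ}
    (f : EucSp (n + m) → EucSp n)
    (x : EucSp (n + m)) (M : Matrix (Fin n) (Fin (n + m)) ℝ)
    (hdiff : HasFDerivAt f (Matrix.toEuclideanLin M).toContinuousLinearMap x)
    (hJ : jacDet M = 0) :
    lowerDensity n f Set.univ x = 0 ∧ upperDensity n f Set.univ x = 0 := by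
  set T := (Matrix.toEuclideanLin M).toContinuousLinearMap
  obtain ⟨v, hv, hperp⟩ := exists_norm_eq_one_forall_inner_toEuclideanLin_eq_zero
    (det_mul_transpose_eq_zero_of_jacDet_eq_zero hJ)
  set bound : ℝ → ℝ := fun ε => (2 * (‖T‖ + ε) + 10 * ε) ^ (n - 1) * (2 * ε) * √n ^ n
  have hle (ε : ℝ) (hε : 0 < ε) : upperDensity n f univ x ≤ ENNReal.ofReal (bound ε) :=
    upperDensity_le_of_eventually_image_ball_subset_slab hv (by positivity) hε
      (image_ball_subset_slab hdiff hv hperp hε)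
  have hbound : Tendsto (fun ε => ENNReal.ofReal (bound ε)) (𝓝[>] 0) (𝓝 0) := by
    have hcont : Continuous bound := by fun_prop
    simpa [bound] using (ENNReal.tendsto_ofReal (hcont.tendsto 0)).mono_left nhdsWithin_le_nhds
  have hupper : upperDensity n f univ x = 0 :=
    le_antisymm (ge_of_tendsto hbound (eventually_nhdsWithin_of_forall hle)) bot_le
  refine ⟨le_antisymm ?_ bot_le, hupper⟩
  exact (liminf_le_limsup (by isBoundedDefault) (by isBoundedDefault)).trans hupper.le

/-- if `f : ℝ^{n+m} → ℝ^n` is `L`-Lipschitz and differentiable at `x`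
with `|J^n f|(x) = 0` (equivalently `rank Df(x) < n`), then
`Θ_*^n(f,x) = Θ^{*n}(f,x) = 0`. -/
theorem stmt19 {n m : ℕ}
    (f : EucSp (n + m) → EucSp n) (L : ℝ≥0) (hf : LipschitzWith L f)
    (x : EucSp (n + m)) (M : Matrix (Fin n) (Fin (n + m)) ℝ)
    (hdiff : HasFDerivAt f (Matrix.toEuclideanLin M).toContinuousLinearMap x)
    (hJ : jacDet M = 0) :
    lowerDensity n f Set.univ x = 0 ∧ upperDensity n f Set.univ x = 0 :=
  stmt19_general f x M hdiff hJ

end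
end
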